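/- The map σ ↦ σ/τ(σ) is strictly increasing on each interval (1/ρ_{ℓ+1}, 1/ρ_ℓ] and on (1/2, 1], and is (weakly) increasing on all of (0,1]. -/

import Mathlib

/-! On each closed interval `[1/ρ_{ℓ+1}, 1/ρ_ℓ]` the function `τ` is affine with non-positive
slope (the two neighbouring formulas agree at the common endpoint `1/ρ_{ℓ+1}`), and on
`[1/2, 1]` it is constant; so `σ/τ(σ)` is strictly increasing on each of these closed pieces.
Consecutive pieces share an endpoint, hence the pieces glue to strict monotonicity on all
of `(0, 1]`, which gives every claim at once. -/

/-- The "magic sequence" ρ_ℓ = 1 + ℓ(ℓ+1)/2, as a real number. -/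
noncomputable def rho (l : ℕ) : ℝ := 1 + (l : ℝ) * ((l : ℝ) + 1) / 2

/-- `IsTau tau` expresses that `tau` is the tradeoff function of Dinur et al.:
`tau σ = 1/2` for `σ > 1/2`, and `tau σ = 1 - 1/(ℓ+1) - σ(ρ_ℓ-2)/(ℓ+1)`
where `ℓ ≥ 1` is the unique integer with `1/ρ_{ℓ+1} < σ ≤ 1/ρ_ℓ`. -/
def IsTau (tau : ℝ → ℝ) : Prop :=
  (∀ σ : ℝ, 1 / 2 < σ → σ ≤ 1 → tau σ = 1 / 2) ∧
  (∀ σ : ℝ, 0 < σ → σ ≤ 1 / 2 → ∀ l : ℕ, 1 ≤ l →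
    1 / rho (l + 1) < σ → σ ≤ 1 / rho l →
    tau σ = 1 - 1 / ((l : ℝ) + 1) - σ * (rho l - 2) / ((l : ℝ) + 1))

open Set

lemma strictMonoOn_div_of_antitoneOn {𝕜 : Type*} [Field 𝕜] [LinearOrder 𝕜]
    [IsStrictOrderedRing 𝕜] {s : Set 𝕜} {t : 𝕜 → 𝕜} (hs : ∀ x ∈ s, 0 < x)
    (ht : AntitoneOn t s) (ht₀ : ∀ x ∈ s, 0 < t x) :
    StrictMonoOn (fun x => x / t x) s := by
  intro a ha b hb hab
  calc a / t a ≤ a / t b := div_le_div_of_nonneg_left (hs a ha).le (ht₀ b hb) (ht ha hb hab.le)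
    _ < b / t b := div_lt_div_of_pos_right hab (ht₀ b hb)

lemma rho_one : rho 1 = 2 := by norm_num [rho]

lemma rho_pos (l : ℕ) : 0 < rho l := by unfold rho; positivity

lemma two_le_rho {l : ℕ} (hl : 1 ≤ l) : 2 ≤ rho l := by
  have h : (1 : ℝ) ≤ l := by exact_mod_cast hl
  unfold rho; nlinarith

lemma rho_succ (l : ℕ) : rho (l + 1) = rho l + (l + 1) := by
  unfold rho; push_cast; ring

lemma one_div_rho_succ_lt (l : ℕ) : 1 / rho (l + 1) < 1 / rho l :=
  one_div_lt_one_div_of_lt (rho_pos l) (by rw [rho_succ]; linarith [l.cast_nonneg (α := ℝ)])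

lemma one_div_rho_le_half {l : ℕ} (hl : 1 ≤ l) : 1 / rho l ≤ 1 / 2 :=
  one_div_le_one_div_of_le two_pos (two_le_rho hl)

lemma exists_one_div_rho_lt {σ : ℝ} (hσ : 0 < σ) : ∃ n : ℕ, 1 ≤ n ∧ 1 / rho n < σ := by
  obtain ⟨n, hn⟩ := exists_nat_gt (1 / σ)
  have hn₀ : (0 : ℝ) < n := (one_div_pos.2 hσ).trans hn
  have hn_le : (n : ℝ) ≤ rho n := by unfold rho; nlinarith [sq_nonneg ((n : ℝ) - 1)]
  refine ⟨n, by exact_mod_cast hn₀, ?_⟩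
  rw [div_lt_iff₀ (rho_pos n)]
  rw [div_lt_iff₀ hσ] at hn
  nlinarith

-- Kept in the shape of `IsTau`, whose second clause then reads `tau σ = tauPiece l σ`.
noncomputable def tauPiece (l : ℕ) (σ : ℝ) : ℝ :=
  1 - 1 / ((l : ℝ) + 1) - σ * (rho l - 2) / ((l : ℝ) + 1)

lemma tauPiece_antitone {l : ℕ} (hl : 1 ≤ l) : Antitone (tauPiece l) := by
  intro a b hab
  have hρ : 0 ≤ rho l - 2 := by linarith [two_le_rho hl]
  unfold tauPiece
  gcongr

lemma tauPiece_pos {l : ℕ} (hl : 1 ≤ l) {σ : ℝ} (hσ : σ ≤ 1 / rho l) : 0 < tauPiece l σ := by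
  have hρ := rho_pos l
  have h2 := two_le_rho hl
  have hl' : (1 : ℝ) ≤ l := by exact_mod_cast hl
  have hσρ : σ * (rho l - 2) ≤ (rho l - 2) / rho l := by
    rw [← one_div_mul_eq_div]; exact mul_le_mul_of_nonneg_right hσ (by linarith)
  have hfrac : (rho l - 2) / rho l < 1 := by rw [div_lt_one hρ]; linarith
  have hform : tauPiece l σ = ((l : ℝ) - σ * (rho l - 2)) / ((l : ℝ) + 1) := by
    unfold tauPiece; field_simp; ring
  rw [hform]
  apply div_pos <;> linarith

-- Equivalent to `ℓ ρ_{ℓ+1} - (ℓ+2) ρ_ℓ + 2 = 0`.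
lemma tauPiece_succ_one_div_rho_succ (l : ℕ) :
    tauPiece (l + 1) (1 / rho (l + 1)) = tauPiece l (1 / rho (l + 1)) := by
  have hρ := rho_pos (l + 1)
  unfold tauPiece
  rw [rho_succ] at hρ ⊢
  push_cast
  field_simp
  unfold rho
  ring

namespace IsTau

variable {tau : ℝ → ℝ} (htau : IsTau tau)
include htau

lemma eq_tauPiece {l : ℕ} (hl : 1 ≤ l) {σ : ℝ} (hσ : σ ∈ Icc (1 / rho (l + 1)) (1 / rho l)) :
    tau σ = tauPiece l σ := by
  have hσ₀ : 0 < σ := (one_div_pos.2 (rho_pos _)).trans_le hσ.1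
  have hσ_half : σ ≤ 1 / 2 := hσ.2.trans (one_div_rho_le_half hl)
  rcases hσ.1.eq_or_lt with hσ_eq | hσ_lt
  · subst hσ_eq
    rw [← tauPiece_succ_one_div_rho_succ]
    exact htau.2 _ hσ₀ hσ_half (l + 1) (by omega) (one_div_rho_succ_lt _) le_rfl
  · exact htau.2 σ hσ₀ hσ_half l hl hσ_lt hσ.2

lemma eq_half {σ : ℝ} (hσ : σ ∈ Icc (1 / 2 : ℝ) 1) : tau σ = 1 / 2 := by
  rcases hσ.1.eq_or_lt with hσ_eq | hσ_lt
  · subst hσ_eq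
    have h := htau.eq_tauPiece le_rfl ⟨(one_div_rho_succ_lt 1).le, le_rfl⟩
    rw [rho_one] at h
    rw [h]
    norm_num [tauPiece, rho_one]
  · exact htau.1 σ hσ_lt hσ.2

lemma strictMonoOn_piece {l : ℕ} (hl : 1 ≤ l) :
    StrictMonoOn (fun σ => σ / tau σ) (Icc (1 / rho (l + 1)) (1 / rho l)) := by
  have hpos : ∀ σ ∈ Icc (1 / rho (l + 1)) (1 / rho l), 0 < σ :=
    fun σ hσ => (one_div_pos.2 (rho_pos _)).trans_le hσ.1
  have heq : EqOn (tauPiece l) tau (Icc (1 / rho (l + 1)) (1 / rho l)) :=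
    fun σ hσ => (htau.eq_tauPiece hl hσ).symm
  refine strictMonoOn_div_of_antitoneOn hpos ((tauPiece_antitone hl).antitoneOn _ |>.congr heq) ?_
  intro σ hσ
  rw [← heq hσ]
  exact tauPiece_pos hl hσ.2

lemma strictMonoOn_Icc_half_one : StrictMonoOn (fun σ => σ / tau σ) (Icc (1 / 2 : ℝ) 1) := by
  have heq : EqOn (fun _ => (1 / 2 : ℝ)) tau (Icc (1 / 2 : ℝ) 1) :=
    fun σ hσ => (htau.eq_half hσ).symm
  refine strictMonoOn_div_of_antitoneOn (fun σ hσ => by linarith [hσ.1])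
    (antitoneOn_const.congr heq) ?_
  intro σ hσ
  rw [← heq hσ]
  norm_num

lemma strictMonoOn_Icc_one_div_rho {n : ℕ} (hn : 1 ≤ n) :
    StrictMonoOn (fun σ => σ / tau σ) (Icc (1 / rho n) 1) := by
  induction n, hn using Nat.le_induction with
  | base => simpa only [rho_one] using htau.strictMonoOn_Icc_half_one
  | succ n hn ih =>
    have h₁ := (one_div_rho_succ_lt n).le
    have h₂ : 1 / rho n ≤ 1 := (one_div_rho_le_half hn).trans (by norm_num)
    rw [← Icc_union_Icc_eq_Icc h₁ h₂]
    exact (htau.strictMonoOn_piece hn).union ih (isGreatest_Icc h₁) (isLeast_Icc h₂)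

lemma strictMonoOn_Ioc_zero_one : StrictMonoOn (fun σ => σ / tau σ) (Ioc (0 : ℝ) 1) := by
  intro a ha b hb hab
  obtain ⟨n, hn, hna⟩ := exists_one_div_rho_lt ha.1
  exact htau.strictMonoOn_Icc_one_div_rho hn ⟨hna.le, ha.2⟩ ⟨hna.le.trans hab.le, hb.2⟩ hab

end IsTau

theorem sigma_div_tau_mono (tau : ℝ → ℝ) (htau : IsTau tau) :
    (∀ l : ℕ, 1 ≤ l →
      StrictMonoOn (fun σ => σ / tau σ) (Set.Ioc (1 / rho (l + 1)) (1 / rho l))) ∧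
    StrictMonoOn (fun σ => σ / tau σ) (Set.Ioc (1 / 2 : ℝ) 1) ∧
    MonotoneOn (fun σ => σ / tau σ) (Set.Ioc (0 : ℝ) 1) := by
  have h := htau.strictMonoOn_Ioc_zero_one
  refine ⟨fun l hl => h.mono ?_, h.mono ?_, h.monotoneOn⟩
  · exact Ioc_subset_Ioc (one_div_pos.2 (rho_pos _)).le
      ((one_div_rho_le_half hl).trans (by norm_num))
  · exact Ioc_subset_Ioc_left (by norm_num)
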